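/- arXiv:2407.07711 — 4 statements merged into one kernel-verified Lean document; each statement's English description precedes it below -/
import Mathlib

section
/- Let N ≥ 2 and let A be the (2^{N-1}-1) × (2^{N-1}-1) real matrix indexed by pairs (B, X), where B ranges over nonempty subsets of {2,...,N} and X ranges over subsets of [N] of even cardinality ≥ 2, with entries A_{B,X} = (-1)^{|B ∩ X|}. Then A is invertible, with inverse given by (A^{-1})_{X,B} = (A_{B,X} - 1)/2^{N-1}. -/
/-- Row index type: nonempty subsets `B ⊆ [N] \ {1}` (index `1` encoded as `⟨0,_⟩`). -/
def RowIdx (N : ℕ) (hN : 2 ≤ N) : Type :=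
  {B : Finset (Fin N) // B ⊆ Finset.univ.erase (⟨0, by omega⟩ : Fin N) ∧ B.Nonempty}

/-- Column index type: subsets `X ⊆ [N]` of even cardinality `≥ 2`. -/
def ColIdx (N : ℕ) : Type :=
  {X : Finset (Fin N) // Even X.card ∧ 2 ≤ X.card}

instance (N : ℕ) (hN : 2 ≤ N) : Fintype (RowIdx N hN) := by unfold RowIdx; infer_instance
instance (N : ℕ) (hN : 2 ≤ N) : DecidableEq (RowIdx N hN) := by unfold RowIdx; infer_instance
instance (N : ℕ) : Fintype (ColIdx N) := by unfold ColIdx; infer_instance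
instance (N : ℕ) : DecidableEq (ColIdx N) := by unfold ColIdx; infer_instance

/-!
For a finite set `U`, `∑_{B ⊆ U} (-1)^{|B ∩ S|}` is `2^{|U|}` if `U` and `S` are disjoint and `0`
otherwise (factor it as `∏_{i ∈ U} (1 + (-1)^{[i ∈ S]})`). With `U = {2,…,N}` and `S` even, `U`
and `S` are disjoint only for `S = ∅`. Since `(-1)^{|B ∩ X|} (-1)^{|B ∩ Y|} = (-1)^{|B ∩ (X ∆ Y)|}`
and `X ∆ Y` is even, the entry `(X, Y)` of `Ainv * A` becomes `δ_{XY}`; the missing row `B = ∅`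
only shifts both sums by `1`. Finally `A` is square: adding `1` to the odd row sets is a bijection
onto the column sets, so the left inverse is also a right inverse.
-/

open Finset
open scoped symmDiff

namespace Finset

variable {α : Type*} [DecidableEq α]

theorem card_symmDiff_add_two_mul_card_inter (s t : Finset α) :
    #(s ∆ t) + 2 * #(s ∩ t) = #s + #t := by
  have hs := card_sdiff_add_card_inter s t
  have ht := card_sdiff_add_card_inter t s
  rw [inter_comm] at ht
  rw [symmDiff_def, sup_eq_union, card_union_of_disjoint disjoint_sdiff_sdiff]
  omega

theorem even_card_symmDiff {s t : Finset α} (hs : Even #s) (ht : Even #t) : Even #(s ∆ t) := by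
  have h := card_symmDiff_add_two_mul_card_inter s t
  have : Even (#(s ∆ t) + 2 * #(s ∩ t)) := h ▸ hs.add ht
  simpa [Nat.even_add] using this

theorem neg_one_pow_card_symmDiff {R : Type*} [Monoid R] [HasDistribNeg R] (s t : Finset α) :
    (-1 : R) ^ #(s ∆ t) = (-1) ^ #s * (-1) ^ #t := by
  rw [← pow_add, ← card_symmDiff_add_two_mul_card_inter, pow_add, pow_mul, neg_one_sq, one_pow,
    mul_one]

theorem sum_powerset_neg_one_pow_card_inter {R : Type*} [CommRing R] (u s : Finset α) :
    ∑ t ∈ u.powerset, (-1 : R) ^ #(t ∩ s) = if Disjoint u s then 2 ^ #u else 0 := by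
  have hsign : ∀ t : Finset α, (-1 : R) ^ #(t ∩ s) = ∏ i ∈ t, if i ∈ s then -1 else 1 := by
    intro t
    rw [prod_ite_mem, prod_const]
  simp_rw [hsign, ← prod_add_one]
  split_ifs with hus
  · rw [prod_congr rfl fun i hi => by rw [if_neg (disjoint_left.mp hus hi)], prod_const]
    norm_num
  · obtain ⟨i, hiu, his⟩ := not_disjoint_iff.mp hus
    exact prod_eq_zero hiu (by simp [his])

theorem odd_card_erase_iff_mem {s : Finset α} (a : α) (hs : Even #s) :
    Odd #(s.erase a) ↔ a ∈ s := by
  by_cases ha : a ∈ s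
  · have hpos : 0 < #s := card_pos.mpr ⟨a, ha⟩
    obtain ⟨k, hk⟩ := hs
    simp only [ha, iff_true, card_erase_of_mem ha]
    exact ⟨k - 1, by omega⟩
  · simpa [ha, erase_eq_of_notMem ha] using hs

theorem disjoint_univ_erase_iff [Fintype α] (a : α) (s : Finset α) :
    Disjoint (univ.erase a) s ↔ s = ∅ ∨ s = {a} := by
  rw [disjoint_erase_comm, ← top_eq_univ, top_disjoint, bot_eq_empty, erase_eq_empty_iff]

end Finset

namespace ColIdx

variable {N : ℕ}

theorem ne_empty (X : ColIdx N) : X.1 ≠ ∅ := fun h => by simpa [h] using X.2.2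

theorem symmDiff_eq_empty_iff {X Y : ColIdx N} : X.1 ∆ Y.1 = ∅ ↔ X = Y := by
  rw [← bot_eq_empty, symmDiff_eq_bot]
  exact ⟨Subtype.ext, congrArg Subtype.val⟩

end ColIdx

namespace RowIdx

variable {N : ℕ} {hN : 2 ≤ N} {R : Type*} [CommRing R]

theorem sum_neg_one_pow_card_inter_of_even {S : Finset (Fin N)} (hS : Even #S) :
    ∑ B : RowIdx N hN, (-1 : R) ^ #(B.1 ∩ S) = if S = ∅ then 2 ^ (N - 1) - 1 else -1 := by
  set z : Fin N := ⟨0, by omega⟩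
  have hrows : ∀ B, B ∈ (univ.erase z).powerset.erase ∅ ↔ B ⊆ univ.erase z ∧ B.Nonempty := by
    simp [nonempty_iff_ne_empty, and_comm]
  have hS1 : S ≠ {z} := by rintro rfl; simp at hS
  calc ∑ B : RowIdx N hN, (-1 : R) ^ #(B.1 ∩ S)
      = ∑ B ∈ (univ.erase z).powerset.erase ∅, (-1 : R) ^ #(B ∩ S) :=
        (sum_subtype _ hrows (fun B => (-1 : R) ^ #(B ∩ S))).symm
    _ = if S = ∅ then 2 ^ (N - 1) - 1 else -1 := by
      rw [sum_erase_eq_sub (empty_mem_powerset _), sum_powerset_neg_one_pow_card_inter,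
        card_erase_of_mem (mem_univ z), card_univ, Fintype.card_fin]
      by_cases h : S = ∅ <;> simp [disjoint_univ_erase_iff, h, hS1]

theorem sum_neg_one_pow_card_inter (Y : ColIdx N) :
    ∑ B : RowIdx N hN, (-1 : R) ^ #(B.1 ∩ Y.1) = -1 := by
  rw [sum_neg_one_pow_card_inter_of_even Y.2.1, if_neg Y.ne_empty]

theorem sum_neg_one_pow_card_inter_mul (X Y : ColIdx N) :
    ∑ B : RowIdx N hN, (-1 : R) ^ #(B.1 ∩ X.1) * (-1) ^ #(B.1 ∩ Y.1)
      = if X = Y then 2 ^ (N - 1) - 1 else -1 := by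
  simp_rw [← neg_one_pow_card_symmDiff, ← inf_eq_inter, ← inf_symmDiff_distrib_left, inf_eq_inter]
  rw [sum_neg_one_pow_card_inter_of_even (even_card_symmDiff X.2.1 Y.2.1)]
  simp only [ColIdx.symmDiff_eq_empty_iff]

theorem zero_notMem (B : RowIdx N hN) : (⟨0, by omega⟩ : Fin N) ∉ B.1 :=
  fun h => by simpa using B.2.1 h

def equivColIdx : RowIdx N hN ≃ ColIdx N where
  toFun B := ⟨if Even #B.1 then B.1 else insert (⟨0, by omega⟩ : Fin N) B.1, by
    have hpos : 0 < #B.1 := card_pos.mpr B.2.2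
    split_ifs with hB
    · obtain ⟨k, hk⟩ := hB
      exact ⟨⟨k, hk⟩, by omega⟩
    · rw [card_insert_of_notMem B.zero_notMem]
      exact ⟨(Nat.not_even_iff_odd.mp hB).add_one, by omega⟩⟩
  invFun X := ⟨X.1.erase ⟨0, by omega⟩, erase_subset_erase _ (subset_univ _), by
    rw [← card_pos]
    have := X.2.2
    have := pred_card_le_card_erase (s := X.1) (a := ⟨0, by omega⟩)
    omega⟩
  left_inv B := by
    apply Subtype.ext
    dsimp only
    split_ifs
    · exact erase_eq_of_notMem B.zero_notMem
    · exact erase_insert B.zero_notMem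
  right_inv X := by
    apply Subtype.ext
    have hodd := odd_card_erase_iff_mem (⟨0, by omega⟩ : Fin N) X.2.1
    dsimp only
    split_ifs with hX
    · exact erase_eq_of_notMem (hodd.not.mp (Nat.not_odd_iff_even.mpr hX))
    · exact insert_erase (hodd.mp (Nat.not_even_iff_odd.mp hX))

end RowIdx

/-- The sign matrix `A_{B,X} = (-1)^{|B ∩ X|}`, with rows indexed by nonempty subsets
`B ⊆ [N] \ {1}` and columns by even-cardinality subsets `X ⊆ [N]` with `|X| ≥ 2`,
is invertible with inverse `(A⁻¹)_{X,B} = (A_{B,X} - 1)/2^{N-1}`. -/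
theorem sign_matrix_inverse (N : ℕ) (hN : 2 ≤ N)
    (A : Matrix (RowIdx N hN) (ColIdx N) ℝ)
    (hA : ∀ B X, A B X = (-1) ^ (B.1 ∩ X.1).card)
    (Ainv : Matrix (ColIdx N) (RowIdx N hN) ℝ)
    (hAinv : ∀ X B, Ainv X B = (A B X - 1) / 2 ^ (N - 1)) :
    Ainv * A = 1 ∧ A * Ainv = 1 := by
  have hleft : Ainv * A = 1 := by
    ext X Y
    simp only [Matrix.mul_apply, hAinv, hA, div_mul_eq_mul_div, sub_mul, one_mul, ← sum_div,
      sum_sub_distrib, RowIdx.sum_neg_one_pow_card_inter_mul, RowIdx.sum_neg_one_pow_card_inter,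
      Matrix.one_apply]
    split_ifs <;> field_simp <;> ring
  exact ⟨hleft, (Matrix.mul_eq_one_comm_of_equiv RowIdx.equivColIdx).mpr hleft⟩
end

section
/- Let z : P([N]) → ℝ^3 be any assignment of vectors to subsets of [N]. Then ∑_{μ ∈ Ω^N} ‖∑_{S ⊆ [N], |S| ≥ 1} z(S) χ_S(μ)‖ ≥ 2 ∑_{μ ∈ D^N} ‖∑_{S ⊆ [N], |S| odd} z(S) χ_S(μ)‖, where D^N = {μ : μ_1 = +1} and ‖·‖ is the Euclidean norm on ℝ^3. -/
open Finset

set_option maxHeartbeats 1600000 in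
/-- For any assignment `z` of vectors in `ℝ³` to subsets of `[N]`,
`∑_{μ ∈ Ω^N} ‖∑_{|S| ≥ 1} χ_S(μ) z(S)‖ ≥ 2 ∑_{μ ∈ D^N} ‖∑_{|S| odd} χ_S(μ) z(S)‖`,
where `D^N = {μ : μ_1 = +1}` and the norm is Euclidean. -/
theorem odd_part_norm_bound (N : ℕ) (hN : 1 ≤ N)
    (z : Finset (Fin N) → EuclideanSpace ℝ (Fin 3)) :
    ∑ μ : Fin N → Bool,
        ‖∑ S ∈ Finset.univ.filter (fun S : Finset (Fin N) => S.Nonempty),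
          (∏ i ∈ S, (if μ i then (1 : ℝ) else -1)) • z S‖ ≥
    2 * ∑ μ ∈ Finset.univ.filter (fun μ : Fin N → Bool => μ ⟨0, hN⟩ = true),
        ‖∑ S ∈ Finset.univ.filter (fun S : Finset (Fin N) => Odd S.card),
          (∏ i ∈ S, (if μ i then (1 : ℝ) else -1)) • z S‖ := by
  set sgn : (Fin N → Bool) → Finset (Fin N) → ℝ :=
    fun μ S => ∏ i ∈ S, (if μ i then (1:ℝ) else -1) with hsgn
  set F : (Fin N → Bool) → EuclideanSpace ℝ (Fin 3) :=
    fun μ => ∑ S ∈ univ.filter (fun S : Finset (Fin N) => S.Nonempty), sgn μ S • z S with hFdef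
  set O : (Fin N → Bool) → EuclideanSpace ℝ (Fin 3) :=
    fun μ => ∑ S ∈ univ.filter (fun S : Finset (Fin N) => Odd S.card), sgn μ S • z S with hOdef
  set E : (Fin N → Bool) → EuclideanSpace ℝ (Fin 3) :=
    fun μ => ∑ S ∈ univ.filter (fun S : Finset (Fin N) => S.Nonempty ∧ Even S.card),
      sgn μ S • z S with hEdef
  have hsplit : ∀ μ, F μ = O μ + E μ := by
    intro μ
    have hset : (univ.filter (fun S : Finset (Fin N) => S.Nonempty)) =
        univ.filter (fun S : Finset (Fin N) => Odd S.card) ∪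
        univ.filter (fun S : Finset (Fin N) => S.Nonempty ∧ Even S.card) := by
      ext S
      simp only [mem_filter, mem_union, mem_univ, true_and]
      constructor
      · intro h
        rcases Nat.even_or_odd S.card with he | ho
        · exact Or.inr ⟨h, he⟩
        · exact Or.inl ho
      · rintro (h | h)
        · rw [← Finset.card_pos]; exact h.pos
        · exact h.1
    have hdisj : Disjoint (univ.filter (fun S : Finset (Fin N) => Odd S.card))
        (univ.filter (fun S : Finset (Fin N) => S.Nonempty ∧ Even S.card)) := by
      rw [Finset.disjoint_left]
      intro S hS hS'
      simp only [mem_filter] at hS hS'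
      exact (Nat.not_even_iff_odd.mpr hS.2) hS'.2.2
    rw [hFdef]
    simp only
    rw [hset, Finset.sum_union hdisj]
  have hsgn_neg : ∀ (μ : Fin N → Bool) (S : Finset (Fin N)),
      sgn (fun i => !μ i) S = (-1) ^ S.card * sgn μ S := by
    intro μ S
    rw [hsgn]
    simp only
    rw [show ((-1:ℝ) ^ S.card) = ∏ _i ∈ S, (-1:ℝ) from (Finset.prod_const _).symm,
      ← Finset.prod_mul_distrib]
    apply Finset.prod_congr rfl
    intro i _
    by_cases h : μ i = true
    · simp [h]
    · simp [h]
  have hFneg : ∀ μ, F (fun i => !μ i) = -O μ + E μ := by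
    intro μ
    rw [hsplit]
    congr 1
    · rw [hOdef]
      simp only
      rw [← Finset.sum_neg_distrib]
      apply Finset.sum_congr rfl
      intro S hS
      simp only [mem_filter] at hS
      rw [hsgn_neg, Odd.neg_one_pow hS.2, ← neg_smul, neg_one_mul]
    · rw [hEdef]
      simp only
      apply Finset.sum_congr rfl
      intro S hS
      simp only [mem_filter] at hS
      rw [hsgn_neg, hS.2.2.neg_one_pow, one_mul]
  have key : ∀ μ, ‖F μ‖ + ‖F (fun i => !μ i)‖ ≥ 2 * ‖O μ‖ := by
    intro μ
    rw [hsplit μ, hFneg μ]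
    have h1 := norm_sub_le (O μ + E μ) (-O μ + E μ)
    have h2 : (O μ + E μ) - (-O μ + E μ) = (2:ℝ) • O μ := by module
    rw [h2, norm_smul] at h1
    simpa using h1
  have hbij : ∑ μ ∈ univ.filter (fun μ : Fin N → Bool => ¬ (μ ⟨0, hN⟩ = true)), ‖F μ‖
      = ∑ μ ∈ univ.filter (fun μ : Fin N → Bool => μ ⟨0, hN⟩ = true),
          ‖F (fun i => !μ i)‖ := by
    apply Finset.sum_nbij' (i := fun μ => fun j => !μ j) (j := fun μ => fun j => !μ j)
    · intro μ hμ
      simp only [mem_filter, mem_univ, true_and] at hμ ⊢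
      simp [Bool.not_eq_true] at hμ
      simp [hμ]
    · intro μ hμ
      simp only [mem_filter, mem_univ, true_and] at hμ ⊢
      simp [hμ]
    · intro μ _; funext j; simp
    · intro μ _; funext j; simp
    · intro μ _; simp only [Bool.not_not]
  have hLHS : ∑ μ : Fin N → Bool, ‖F μ‖
      = ∑ μ ∈ univ.filter (fun μ : Fin N → Bool => μ ⟨0, hN⟩ = true),
          (‖F μ‖ + ‖F (fun i => !μ i)‖) := by
    rw [Finset.sum_add_distrib, ← hbij,
      Finset.sum_filter_add_sum_filter_not univ (fun μ : Fin N → Bool => μ ⟨0, hN⟩ = true)]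
  have goal2 : ∑ μ : Fin N → Bool, ‖F μ‖ ≥
      2 * ∑ μ ∈ univ.filter (fun μ : Fin N → Bool => μ ⟨0, hN⟩ = true), ‖O μ‖ := by
    rw [hLHS, Finset.mul_sum]
    exact Finset.sum_le_sum (fun μ _ => key μ)
  simp only [hFdef, hOdef, hsgn] at goal2
  exact goal2
end

section
/- Suppose for each μ in {-1,+1}^N we have real numbers a(μ) and vectors b(μ) ∈ ℝ^3 with a(μ) ≥ ‖b(μ)‖, and suppose ∑_{μ ∈ Ω^N} a(μ) = 2^N. Writing b(μ) = ∑_{S ⊆ [N]} z(S)χ_S(μ) with Fourier coefficients z(S) ∈ ℝ^3, then 2^{N-1} ≥ ∑_{μ ∈ D^N} ‖∑_{S, |S| odd} z(S) χ_S(μ)‖, where D^N = {μ : μ_1 = +1}. -/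
/-- The character `χ_S(μ) = ∏_{i ∈ S} μ_i` on the Boolean cube (`true ↦ +1`, `false ↦ -1`). -/
def chi {N : ℕ} (S : Finset (Fin N)) (μ : Fin N → Bool) : ℝ :=
  ∏ i ∈ S, (if μ i then 1 else -1)

lemma chi_not {N : ℕ} (S : Finset (Fin N)) (μ : Fin N → Bool) :
    chi S (fun i => !μ i) = (-1) ^ S.card * chi S μ := by
  unfold chi
  rw [← Finset.prod_const, ← Finset.prod_mul_distrib]
  apply Finset.prod_congr rfl
  intro i _
  rcases Bool.eq_false_or_eq_true (μ i) with h | h <;> simp [h]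

lemma odd_part {N : ℕ}
    (b : (Fin N → Bool) → EuclideanSpace ℝ (Fin 3))
    (z : Finset (Fin N) → EuclideanSpace ℝ (Fin 3))
    (hb : ∀ μ, b μ = ∑ S : Finset (Fin N), chi S μ • z S) (μ : Fin N → Bool) :
    (∑ S ∈ Finset.univ.filter (fun S : Finset (Fin N) => Odd S.card), chi S μ • z S)
      = (2:ℝ)⁻¹ • (b μ - b (fun i => !μ i)) := by
  rw [hb, hb, ← Finset.sum_sub_distrib, Finset.smul_sum]
  rw [← Finset.sum_filter_add_sum_filter_not Finset.univ (fun S : Finset (Fin N) => Odd S.card)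
      (fun S => (2:ℝ)⁻¹ • (chi S μ • z S - chi S (fun i => !μ i) • z S))]
  have h1 : ∀ S ∈ Finset.univ.filter (fun S : Finset (Fin N) => Odd S.card),
      (2:ℝ)⁻¹ • (chi S μ • z S - chi S (fun i => !μ i) • z S) = chi S μ • z S := by
    intro S hS
    rw [Finset.mem_filter] at hS
    rw [chi_not, Odd.neg_one_pow hS.2]
    rw [← sub_smul, smul_smul]
    ring_nf
  have h2 : ∀ S ∈ Finset.univ.filter (fun S : Finset (Fin N) => ¬ Odd S.card),
      (2:ℝ)⁻¹ • (chi S μ • z S - chi S (fun i => !μ i) • z S) = 0 := by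
    intro S hS
    rw [Finset.mem_filter, Nat.not_odd_iff_even] at hS
    rw [chi_not, Even.neg_one_pow hS.2, one_mul, sub_self, smul_zero]
  rw [Finset.sum_congr rfl h1, Finset.sum_congr rfl h2, Finset.sum_const_zero, add_zero]

/-- Core inequality of Theorem 1 (necessary condition for joint measurability):
if `a(μ) ≥ ‖b(μ)‖` for all `μ ∈ {-1,+1}^N`, `∑_μ a(μ) = 2^N`, and
`b(μ) = ∑_S χ_S(μ) z(S)`, then
`2^{N-1} ≥ ∑_{μ ∈ D^N} ‖∑_{|S| odd} χ_S(μ) z(S)‖` with `D^N = {μ : μ_1 = +1}`. -/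
theorem necessary_condition (N : ℕ) (hN : 1 ≤ N)
    (a : (Fin N → Bool) → ℝ)
    (b : (Fin N → Bool) → EuclideanSpace ℝ (Fin 3))
    (z : Finset (Fin N) → EuclideanSpace ℝ (Fin 3))
    (hab : ∀ μ, ‖b μ‖ ≤ a μ)
    (hsum : ∑ μ : Fin N → Bool, a μ = 2 ^ N)
    (hb : ∀ μ, b μ = ∑ S : Finset (Fin N), chi S μ • z S) :
    ∑ μ ∈ Finset.univ.filter (fun μ : Fin N → Bool => μ ⟨0, hN⟩ = true),
        ‖∑ S ∈ Finset.univ.filter (fun S : Finset (Fin N) => Odd S.card),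
          chi S μ • z S‖ ≤ 2 ^ (N - 1) := by
  set D := Finset.univ.filter (fun μ : Fin N → Bool => μ ⟨0, hN⟩ = true) with hD
  have step1 : ∑ μ ∈ D, ‖∑ S ∈ Finset.univ.filter (fun S : Finset (Fin N) => Odd S.card),
      chi S μ • z S‖ ≤ ∑ μ ∈ D, (2:ℝ)⁻¹ * (a μ + a (fun i => !μ i)) := by
    apply Finset.sum_le_sum
    intro μ _
    rw [odd_part b z hb μ, norm_smul]
    have : ‖b μ - b (fun i => !μ i)‖ ≤ a μ + a (fun i => !μ i) :=
      (norm_sub_le _ _).trans (add_le_add (hab _) (hab _))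
    rw [Real.norm_eq_abs, abs_of_pos (by norm_num : (0:ℝ) < 2⁻¹)]
    exact mul_le_mul_of_nonneg_left this (by norm_num)
  have step2 : ∑ μ ∈ D, (2:ℝ)⁻¹ * (a μ + a (fun i => !μ i)) = 2 ^ (N-1) := by
    rw [← Finset.mul_sum, Finset.sum_add_distrib]
    have hcomp : ∑ μ ∈ D, a (fun i => !μ i) = ∑ μ ∈ Dᶜ, a μ := by
      apply Finset.sum_nbij' (fun μ => fun i => !μ i) (fun μ => fun i => !μ i)
      · intro μ hμ
        simp only [hD, Finset.mem_compl, Finset.mem_filter, Finset.mem_univ, true_and] at *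
        simp [hμ]
      · intro μ hμ
        simp only [hD, Finset.mem_compl, Finset.mem_filter, Finset.mem_univ, true_and] at *
        simpa using hμ
      · intro μ _; funext i; simp
      · intro μ _; funext i; simp
      · intro μ _; rfl
    rw [hcomp, Finset.sum_add_sum_compl, hsum]
    have : (2:ℝ) ^ N = 2 ^ (N - 1) * 2 := by
      rw [← pow_succ, Nat.sub_add_cancel hN]
    rw [this]; ring
  exact step1.trans step2.le
end

section
/- The four vectors z_1 = (0.7, 0, 0), z_2 = (0.8, 0.4, 0), z_3 = (0.3, 0.4, 0), z_4 = (0.1, 0.2, 0) in ℝ^3 satisfy ‖z_1 + z_4‖ + ‖z_1 - z_2‖ + ‖z_2 - z_3‖ + ‖z_3 - z_4‖ > 2. -/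
lemma sqrt_lower (a b : ℝ) (hb : 0 ≤ b) (h : b^2 < a) : b < Real.sqrt a := by
  nlinarith [Real.sq_sqrt (le_trans (sq_nonneg b) h.le), Real.sqrt_nonneg a,
    sq_nonneg (Real.sqrt a - b)]

/-- The four coplanar Bloch vectors of the counterexample satisfy
`‖z₁ + z₄‖ + ‖z₁ - z₂‖ + ‖z₂ - z₃‖ + ‖z₃ - z₄‖ > 2`. -/
theorem counterexample_violates_coplanar_bound :
    let z1 : EuclideanSpace ℝ (Fin 3) := (WithLp.equiv 2 (Fin 3 → ℝ)).symm ![0.7, 0, 0]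
    let z2 : EuclideanSpace ℝ (Fin 3) := (WithLp.equiv 2 (Fin 3 → ℝ)).symm ![0.8, 0.4, 0]
    let z3 : EuclideanSpace ℝ (Fin 3) := (WithLp.equiv 2 (Fin 3 → ℝ)).symm ![0.3, 0.4, 0]
    let z4 : EuclideanSpace ℝ (Fin 3) := (WithLp.equiv 2 (Fin 3 → ℝ)).symm ![0.1, 0.2, 0]
    ‖z1 + z4‖ + ‖z1 - z2‖ + ‖z2 - z3‖ + ‖z3 - z4‖ > 2 := by
  intro z1 z2 z3 z4
  have h1 : ‖z1 + z4‖ = Real.sqrt 0.68 := by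
    rw [EuclideanSpace.norm_eq]
    simp [z1, z4, Fin.sum_univ_three]
    norm_num
  have h2 : ‖z1 - z2‖ = Real.sqrt 0.17 := by
    rw [EuclideanSpace.norm_eq]
    simp [z1, z2, Fin.sum_univ_three]
    norm_num
  have h3 : ‖z2 - z3‖ = Real.sqrt 0.25 := by
    rw [EuclideanSpace.norm_eq]
    simp [z2, z3, Fin.sum_univ_three]
    norm_num
  have h4 : ‖z3 - z4‖ = Real.sqrt 0.08 := by
    rw [EuclideanSpace.norm_eq]
    simp [z3, z4, Fin.sum_univ_three]
    norm_num
  rw [h1, h2, h3, h4]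
  have e3 : Real.sqrt 0.25 = 0.5 := by
    rw [show (0.25:ℝ) = 0.5^2 by norm_num, Real.sqrt_sq (by norm_num)]
  have b1 : (0.824:ℝ) < Real.sqrt 0.68 := sqrt_lower _ _ (by norm_num) (by norm_num)
  have b2 : (0.412:ℝ) < Real.sqrt 0.17 := sqrt_lower _ _ (by norm_num) (by norm_num)
  have b4 : (0.282:ℝ) < Real.sqrt 0.08 := sqrt_lower _ _ (by norm_num) (by norm_num)
  rw [e3]; linarith
end
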